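/- Let z_1,…,z_n and w_1,…,w_n be spinors in ℂ². Then the determinant of the 4×4 complex matrix with 2×2 blocks [[1₂, Σᵢ |z_i⟩[w_i|], [−Σᵢ |w_i⟩[z_i|, 1₂]] equals (1 + Σ_{i<j} [w_i|w_j⟩[z_j|z_i⟩)². (This is the evaluation det(1+X) for the theta graph Θ_n with n edges from a vertex carrying the z_i to a vertex carrying the w_i, giving the coherent amplitude A_{Θ_n}(z_i,w_i) = (1 + Σ_{i<j}[w_i|w_j⟩[z_j|z_i⟩)^{−2}.) -/

import Mathlib

/-!
For `2 × 2` matrices the adjugate is linear and sends `|z⟩[w|` to `-|w⟩[z|`, so with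
`M = Σᵢ |zᵢ⟩[wᵢ|` the lower-left block is `adj M`. The Schur complement of the upper-left
identity block is therefore `1 - adj M * M = (1 - det M) • 1`, whose determinant is
`(1 - det M)²`. Cauchy–Binet for the rank-one summands gives
`det M = Σ_{i<j} [zᵢ|zⱼ⟩[wᵢ|wⱼ⟩ = -Σ_{i<j} [wᵢ|wⱼ⟩[zⱼ|zᵢ⟩`.
-/

namespace SpinNetworks

noncomputable section

open Matrix BigOperators

/-- A spinor `z = (α,β)ᵀ ∈ ℂ²`. -/
abbrev Spinor : Type := Fin 2 → ℂ

/-- The antisymmetric holomorphic bracket `[z|w⟩ = α_z β_w − α_w β_z`. -/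
def bracket (z w : Spinor) : ℂ := z 0 * w 1 - w 0 * z 1

/-- The covector `[w| = (−β_w, α_w)`. -/
def braVec (w : Spinor) : Spinor := ![-(w 1), w 0]

/-- The 2×2 matrix `|z⟩[w|`. -/
def ketBra (z w : Spinor) : Matrix (Fin 2) (Fin 2) ℂ := Matrix.vecMulVec z (braVec w)

open Finset

theorem sum_sum_mul_eq_sum_sum_Ioi_of_antisymm {ι R : Type*} [Fintype ι] [LinearOrder ι]
    [LocallyFiniteOrderTop ι] [LocallyFiniteOrderBot ι] [CommRing R] (x c : ι → ι → R)
    (hc_diag : ∀ i, c i i = 0) (hc_swap : ∀ i j, c j i = -c i j) :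
    ∑ i, ∑ j, x i j * c i j = ∑ i, ∑ j ∈ Ioi i, (x i j - x j i) * c i j := by
  have hoff : ∀ i, ∑ j, x i j * c i j = ∑ j ∈ {i}ᶜ, x i j * c i j := fun i => by
    rw [Fintype.sum_eq_add_sum_compl i, hc_diag, mul_zero, zero_add]
  simp_rw [hoff, ← sum_sum_Ioi_add_eq_sum_sum_off_diag (fun j i => x i j * c i j)]
  exact sum_congr rfl fun i _ => sum_congr rfl fun j _ => by rw [hc_swap]; ring

theorem det_sum_vecMulVec_fin_two {ι R : Type*} [Fintype ι] [LinearOrder ι]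
    [LocallyFiniteOrderTop ι] [LocallyFiniteOrderBot ι] [CommRing R] (u v : ι → Fin 2 → R) :
    (∑ i, vecMulVec (u i) (v i)).det
      = ∑ i, ∑ j ∈ Ioi i, (of ![u i, u j]).det * (of ![v i, v j]).det := by
  have hexpand : (∑ i, vecMulVec (u i) (v i)).det
      = ∑ i, ∑ j, u i 0 * u j 1 * (of ![v i, v j]).det := by
    simp only [det_fin_two, Matrix.sum_apply, vecMulVec_apply, sum_mul_sum, ← sum_sub_distrib,
      of_apply, cons_val_zero, cons_val_one]
    exact sum_congr rfl fun i _ => sum_congr rfl fun j _ => by ring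
  rw [hexpand, sum_sum_mul_eq_sum_sum_Ioi_of_antisymm]
  · simp only [det_fin_two, of_apply, cons_val_zero, cons_val_one]
    exact sum_congr rfl fun i _ => sum_congr rfl fun j _ => by ring
  · intro i; simp [det_fin_two, mul_comm]
  · intro i j; simp only [det_fin_two, of_apply, cons_val_zero, cons_val_one]; ring

theorem adjugate_fin_two_add {R : Type*} [CommRing R] (A B : Matrix (Fin 2) (Fin 2) R) :
    adjugate (A + B) = adjugate A + adjugate B := by
  ext i j; fin_cases i <;> fin_cases j <;> simp [adjugate_fin_two, add_comm]

theorem bracket_eq_det (z w : Spinor) : bracket z w = (of ![z, w]).det := by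
  simp only [bracket, det_fin_two, of_apply, cons_val_zero, cons_val_one]; ring

theorem bracket_swap (z w : Spinor) : bracket w z = -bracket z w := by
  simp only [bracket]; ring

theorem bracket_braVec (z w : Spinor) : bracket (braVec z) (braVec w) = bracket z w := by
  simp only [bracket, braVec, cons_val_zero, cons_val_one]; ring

theorem det_sum_ketBra {ι : Type*} [Fintype ι] [LinearOrder ι]
    [LocallyFiniteOrderTop ι] [LocallyFiniteOrderBot ι] (z w : ι → Spinor) :
    (∑ i, ketBra (z i) (w i)).det
      = ∑ i, ∑ j ∈ Ioi i, bracket (z i) (z j) * bracket (w i) (w j) := by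
  simp only [ketBra, det_sum_vecMulVec_fin_two, ← bracket_eq_det, bracket_braVec]

theorem adjugate_ketBra (z w : Spinor) : adjugate (ketBra z w) = -ketBra w z := by
  ext i j
  fin_cases i <;> fin_cases j <;> simp [adjugate_fin_two, ketBra, braVec] <;> ring

theorem adjugate_sum_ketBra {ι : Type*} (s : Finset ι) (z w : ι → Spinor) :
    adjugate (∑ i ∈ s, ketBra (z i) (w i)) = -∑ i ∈ s, ketBra (w i) (z i) := by
  have := map_sum (AddMonoidHom.mk' (adjugate : Matrix (Fin 2) (Fin 2) ℂ → _)
    adjugate_fin_two_add) (fun i => ketBra (z i) (w i)) s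
  simpa only [AddMonoidHom.mk'_apply, adjugate_ketBra, sum_neg_distrib] using this

/-- for the theta graph `Θ_n` with spinors `z_i` at the first vertex and
`w_i` at the second, the determinant of the 4×4 block matrix
`[[1₂, Σᵢ |z_i⟩[w_i|], [−Σᵢ |w_i⟩[z_i|, 1₂]]` equals
`(1 + Σ_{i<j} [w_i|w_j⟩[z_j|z_i⟩)²`; this is `det(1+X)`, so the coherent amplitude is
`A_{Θ_n}(z_i,w_i) = (1 + Σ_{i<j}[w_i|w_j⟩[z_j|z_i⟩)⁻²`. -/
theorem det_theta_graph (n : ℕ) (z w : Fin n → Spinor) :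
    (Matrix.fromBlocks (1 : Matrix (Fin 2) (Fin 2) ℂ) (∑ i : Fin n, ketBra (z i) (w i))
        (-∑ i : Fin n, ketBra (w i) (z i)) (1 : Matrix (Fin 2) (Fin 2) ℂ)).det
      = (1 + ∑ i : Fin n, ∑ j ∈ Finset.Ioi i, bracket (w i) (w j) * bracket (z j) (z i)) ^ 2 := by
  have hdet : (∑ i, ketBra (z i) (w i)).det
      = -∑ i : Fin n, ∑ j ∈ Ioi i, bracket (w i) (w j) * bracket (z j) (z i) := by
    simp only [det_sum_ketBra, ← sum_neg_distrib]
    exact sum_congr rfl fun i _ => sum_congr rfl fun j _ => by rw [bracket_swap (z i)]; ring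
  rw [det_fromBlocks_one₁₁, ← adjugate_sum_ketBra, adjugate_mul]
  nth_rw 1 [← one_smul ℂ (1 : Matrix (Fin 2) (Fin 2) ℂ)]
  rw [← sub_smul, det_smul, det_one, Fintype.card_fin, hdet]
  ring

end
end SpinNetworks
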